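/- arXiv:1402.3668 — 2 statements merged into one kernel-verified Lean document; each statement's English description precedes it below -/
import Mathlib

section
/- Let q be a prime power, K a field extension of F_q, and a, b, c ∈ K with c ≠ ab and b ≠ a^q. Then under the substitution X = ((c − ab)/(b − a^q))·Z − a, the polynomial X^{q+1} + aX^q + bX + c equals a nonzero scalar multiple of Z^{q+1} + BZ + B, where B = (b − a^q)^{q+1}/(c − ab)^q. -/
open Polynomial

/-- For `q = p^l`, a field `K` of characteristic `p`, and `a, b, c ∈ K` with `c ≠ ab`,
`b ≠ a^q`, the substitution `X = ((c−ab)/(b−a^q))·Z − a` turns `X^{q+1} + aX^q + bX + c`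
into a nonzero scalar multiple of `Z^{q+1} + BZ + B` with `B = (b−a^q)^{q+1}/(c−ab)^q`. -/
theorem stmt4 (p l : ℕ) [Fact (Nat.Prime p)] (hl : 0 < l)
    (K : Type*) [Field K] [CharP K p] (a b c : K)
    (h1 : c ≠ a * b) (h2 : b ≠ a ^ (p ^ l)) :
    ∃ lam : K, lam ≠ 0 ∧
      (X ^ (p ^ l + 1) + C a * X ^ (p ^ l) + C b * X + C c).comp
          (C ((c - a * b) / (b - a ^ (p ^ l))) * X - C a) =
        C lam *
          (X ^ (p ^ l + 1) +
            C ((b - a ^ (p ^ l)) ^ (p ^ l + 1) / (c - a * b) ^ (p ^ l)) * X +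
            C ((b - a ^ (p ^ l)) ^ (p ^ l + 1) / (c - a * b) ^ (p ^ l))) := by
  set q := p ^ l with hq
  have hc : c - a * b ≠ 0 := sub_ne_zero.mpr h1
  have hb : b - a ^ q ≠ 0 := sub_ne_zero.mpr h2
  set d : K := (c - a * b) / (b - a ^ q) with hd
  have hdne : d ≠ 0 := div_ne_zero hc hb
  set B : K := (b - a ^ q) ^ (q + 1) / (c - a * b) ^ q with hB
  refine ⟨d ^ (q + 1), pow_ne_zero _ hdne, ?_⟩
  have key : d ^ (q + 1) * B = c - a * b := by
    rw [hd, hB, div_pow]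
    field_simp
    ring
  have key2 : (b - a ^ q) * d = c - a * b := by
    rw [hd]; field_simp
  have hfrob : (C d * X - C a : K[X]) ^ q = C (d ^ q) * X ^ q - C (a ^ q) := by
    rw [hq, sub_pow_char_pow, mul_pow, C_pow, C_pow]
  simp only [add_comp, mul_comp, pow_comp, X_comp, C_comp]
  have lhs_eq : (C d * X - C a : K[X]) ^ (q + 1) + C a * (C d * X - C a) ^ q +
      C b * (C d * X - C a) + C c =
      C (d ^ (q + 1)) * X ^ (q + 1) + C ((b - a ^ q) * d) * X + C (c - a * b) := by
    rw [pow_succ, hfrob]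
    simp only [C_pow, C_mul, C_sub, pow_succ]
    ring
  rw [lhs_eq, key2, mul_add, mul_add, ← C_mul, key, ← mul_assoc, ← C_mul, key]
end

section
/- Let K be a finite field and f ∈ K[X] a squarefree polynomial of degree n. Then f is m-smooth (all irreducible factors have degree ≤ m) if and only if f divides the product ∏_{i=1}^{m} (X^{|K|^i} − X) in K[X]. -/
/-!
A squarefree polynomial divides a product exactly when each of its irreducible factors does.
An irreducible `g` of degree `d` divides `X ^ q ^ i - X` iff `d ∣ i`, and some `i ∈ [1, m]` is a
multiple of `d` iff `d ≤ m`.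
-/

open Polynomial UniqueFactorizationMonoid

theorem Squarefree.dvd_iff_forall_irreducible_dvd {M : Type*} [CommMonoidWithZero M]
    [UniqueFactorizationMonoid M] {a b : M} (ha : Squarefree a) :
    a ∣ b ↔ ∀ p, Irreducible p → p ∣ a → p ∣ b := by
  refine ⟨fun hab p _ hpa ↦ hpa.trans hab, fun h ↦ ?_⟩
  nontriviality M
  let := UniqueFactorizationMonoid.strongNormalizationMonoid (α := M)
  rw [← (radical_associated ha.isRadical ha.ne_zero).dvd_iff_dvd_left]
  refine Finset.prod_dvd_of_isRelPrime pairwise_primeFactors_isRelPrime fun p hp ↦ ?_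
  rw [mem_primeFactors] at hp
  exact h p (irreducible_of_normalized_factor p hp) (dvd_of_mem_normalizedFactors hp)

theorem Irreducible.dvd_prod_X_pow_card_pow_sub_X_iff {K : Type*} [Field K] [Finite K]
    {g : K[X]} (hg : Irreducible g) (m : ℕ) :
    g ∣ ∏ i ∈ Finset.Icc 1 m, (X ^ Nat.card K ^ i - X) ↔ g.natDegree ≤ m := by
  simp only [hg.prime.dvd_finsetProd_iff, ← hg.natDegree_dvd_iff_dvd_X_pow_card_pow_sub_X,
    Finset.mem_Icc]
  refine ⟨fun ⟨i, ⟨hi, him⟩, hdi⟩ ↦ (Nat.le_of_dvd hi hdi).trans him,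
    fun hdm ↦ ⟨g.natDegree, ⟨hg.natDegree_pos, hdm⟩, dvd_rfl⟩⟩

theorem stmt16_general (K : Type*) [Field K] [Fintype K] (f : Polynomial K) (m : ℕ)
    (hf : Squarefree f) :
    (∀ g : Polynomial K, Irreducible g → g ∣ f → g.natDegree ≤ m) ↔
      f ∣ ∏ i ∈ Finset.Icc 1 m, (X ^ (Fintype.card K ^ i) - X) := by
  rw [hf.dvd_iff_forall_irreducible_dvd, Fintype.card_eq_nat_card]
  exact forall₂_congr fun g hg ↦ imp_congr_right fun _ ↦
    (hg.dvd_prod_X_pow_card_pow_sub_X_iff m).symm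

/-- A squarefree polynomial `f` of degree `n ≥ 1` over a finite field `K` is `m`-smooth
(all irreducible factors have degree `≤ m`) iff `f` divides `∏_{i=1}^m (X^{|K|^i} − X)`. -/
theorem stmt16 (K : Type*) [Field K] [Fintype K] (f : Polynomial K) (n m : ℕ)
    (hf : Squarefree f) (hn : f.natDegree = n) (hn1 : 1 ≤ n) :
    (∀ g : Polynomial K, Irreducible g → g ∣ f → g.natDegree ≤ m) ↔
      f ∣ ∏ i ∈ Finset.Icc 1 m, (X ^ (Fintype.card K ^ i) - X) :=
  stmt16_general K f m hf
end
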